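/- Deterministic covering form of the generic list-decodable mean estimation upper bound (Proposition on minimax error upper bounds): Let n be a positive integer, let α ∈ (0, 1/2), let u > 0, and let T be a finite nonempty subset of ℝⁿ. Then there exists a finite set F ⊆ ℝⁿ with |F| ≤ 5/α such that the following holds: for every μ ∈ ℝⁿ for which there exists a subset S ⊆ T with |S| ≥ α·|T| and with the property that for every unit vector v ∈ ℝⁿ the number of points x ∈ S with |⟨v, x − μ⟩| ≥ u is at most (α/10)·|S|, there exists f ∈ F with ‖f − μ‖₂ ≤ 2u. -/

import Mathlib

/-!
Call `μ` a candidate mean if some `α`-fraction `S` of `T` is concentrated around `μ`: along every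
unit direction, at most an `α/10`-fraction of `S` lies at distance `≥ u` from `μ`. If two
candidates `μ ≠ μ'` are `2u` apart, then projecting onto the direction of `μ' - μ` shows that every
common point of their sets is far from one of them, so the sets share at most
`(α/10)(|S| + |S'|)` points. For `k` pairwise `2u`-separated candidates, Cauchy–Schwarz applied to
the multiplicities of the points of `T` gives `(∑ |Sᵢ|)² ≤ |T| ∑ᵢⱼ |Sᵢ ∩ Sⱼ|`, whence
`α k ≤ 1 + α k / 5`, i.e. `k ≤ 5 / (4α)`. A maximal `2u`-separated set of candidates is therefore
finite, has at most `5/α` points, and by maximality every candidate lies within `2u` of it.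
-/

open Finset
open scoped NNReal ENNReal RealInnerProductSpace

namespace Finset

variable {ι α : Type*} [DecidableEq α] {F : Finset ι} {T : Finset α} {A : ι → Finset α}

theorem sq_sum_card_le_card_mul_sum_sum_card_inter (hA : ∀ i ∈ F, A i ⊆ T) :
    (∑ i ∈ F, #(A i)) ^ 2 ≤ #T * ∑ i ∈ F, ∑ j ∈ F, #(A i ∩ A j) := by
  set c : α → ℕ := fun x ↦ ∑ i ∈ F, if x ∈ A i then 1 else 0
  have hc : ∑ x ∈ T, c x = ∑ i ∈ F, #(A i) := by
    rw [sum_comm]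
    refine sum_congr rfl fun i hi ↦ ?_
    rw [sum_boole, filter_mem_eq_inter, inter_eq_right.2 (hA i hi), Nat.cast_id]
  have hc2 : ∑ x ∈ T, c x ^ 2 = ∑ i ∈ F, ∑ j ∈ F, #(A i ∩ A j) := by
    simp_rw [c, sq, sum_mul_sum, ite_zero_mul_ite_zero, one_mul, ← mem_inter]
    rw [sum_comm]
    refine sum_congr rfl fun i hi ↦ ?_
    rw [sum_comm]
    refine sum_congr rfl fun j _ ↦ ?_
    rw [sum_boole, filter_mem_eq_inter, inter_eq_right.2 (inter_subset_left.trans (hA i hi)),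
      Nat.cast_id]
  rw [← hc, ← hc2]
  exact sq_sum_le_card_mul_sum_sq

theorem card_mul_le_of_card_inter_le [DecidableEq ι] {a β : ℝ} (hT : T.Nonempty) (hβ : 0 ≤ β)
    (hA : ∀ i ∈ F, A i ⊆ T) (hlarge : ∀ i ∈ F, a * #T ≤ #(A i))
    (hinter : ∀ i ∈ F, ∀ j ∈ F, i ≠ j → (#(A i ∩ A j) : ℝ) ≤ β * #(A i) + β * #(A j)) :
    a * #F ≤ 1 + 2 * β * #F := by
  set N : ℝ := (#T : ℝ)
  set m : ℝ := ∑ i ∈ F, (#(A i) : ℝ)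
  have hN : 0 < N := by simpa [N] using hT.card_pos
  have hm : a * N * #F ≤ m := by
    simpa [mul_comm] using sum_le_sum hlarge
  have hpairs : ∑ i ∈ F, ∑ j ∈ F, (#(A i ∩ A j) : ℝ) ≤ m * (1 + 2 * β * #F) := by
    calc ∑ i ∈ F, ∑ j ∈ F, (#(A i ∩ A j) : ℝ)
        ≤ ∑ i ∈ F, ∑ j ∈ F, (β * #(A i) + β * #(A j) + if i = j then (#(A i) : ℝ) else 0) := by
          gcongr with i hi j hj
          by_cases hij : i = j
          · subst hij; simp only [inter_self, if_true]
            have : 0 ≤ β * (#(A i) : ℝ) := by positivity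
            linarith
          · simpa [hij] using hinter i hi j hj hij
      _ = m * (1 + 2 * β * #F) := by
          simp only [sum_add_distrib, ← mul_sum, sum_ite_eq, sum_ite_mem, inter_self, sum_const,
            nsmul_eq_mul]
          ring
  have hsq : m ^ 2 ≤ N * (m * (1 + 2 * β * #F)) := by
    have := sq_sum_card_le_card_mul_sum_sum_card_inter hA
    calc m ^ 2 ≤ N * ∑ i ∈ F, ∑ j ∈ F, (#(A i ∩ A j) : ℝ) := by
          simp only [m, N]; exact_mod_cast this
      _ ≤ _ := by gcongr
  have hmN : m ≤ N * (1 + 2 * β * #F) := by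
    rcases (sum_nonneg fun i _ ↦ Nat.cast_nonneg (#(A i)) : 0 ≤ m).eq_or_lt with hm0 | hm0
    · have : 0 ≤ N * (1 + 2 * β * #F) := by positivity
      linarith
    · exact le_of_mul_le_mul_right (by nlinarith) hm0
  exact le_of_mul_le_mul_right (by linarith) hN

end Finset

namespace Metric

variable {X : Type*} [PseudoEMetricSpace X] {ε : ℝ≥0} {A : Set X}

theorem packingNumber_le_of_forall_finset {B : ℕ}
    (h : ∀ C : Finset X, ↑C ⊆ A → IsSeparated ε (C : Set X) → #C ≤ B) :
    packingNumber ε A ≤ B := by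
  refine iSup₂_le fun C hCA ↦ iSup_le fun hC ↦ ?_
  by_contra! hlt
  obtain ⟨D, hDC, hD⟩ := Set.exists_subset_encard_eq (Order.add_one_le_of_lt hlt)
  have hfin : D.Finite := Set.encard_ne_top_iff.1 (by simp [hD])
  have := h hfin.toFinset (by simpa using hDC.trans hCA) (by simpa using hC.subset hDC)
  rw [hfin.encard_eq_coe_toFinset_card] at hD
  norm_cast at hD
  omega

theorem exists_finset_isSeparated_isCover {B : ℕ}
    (h : ∀ C : Finset X, ↑C ⊆ A → IsSeparated ε (C : Set X) → #C ≤ B) :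
    ∃ N : Finset X, ↑N ⊆ A ∧ IsSeparated ε (N : Set X) ∧ IsCover ε A N := by
  have hpack : packingNumber ε A ≠ ⊤ :=
    ((packingNumber_le_of_forall_finset h).trans_lt (ENat.natCast_lt_top B)).ne
  have hfin : (maximalSeparatedSet ε A).Finite := by
    rw [← Set.encard_ne_top_iff, encard_maximalSeparatedSet hpack]
    exact hpack
  refine ⟨hfin.toFinset, ?_, ?_, ?_⟩ <;> rw [hfin.coe_toFinset]
  exacts [maximalSeparatedSet_subset, isSeparated_maximalSeparatedSet,
    isCover_maximalSeparatedSet hpack]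

theorem IsSeparated.pairwise_lt_dist {Y : Type*} [PseudoMetricSpace Y] {s : Set Y}
    (h : IsSeparated ε s) : s.Pairwise fun x y ↦ (ε : ℝ) < dist x y :=
  h.imp fun x y hxy ↦ by
    rwa [edist_nndist, ENNReal.coe_lt_coe, ← NNReal.coe_lt_coe, coe_nndist] at hxy

end Metric

section InnerProductSpace

variable {E : Type*} [NormedAddCommGroup E] [InnerProductSpace ℝ E]

def IsConcentratedAround (S : Finset E) (μ : E) (u β : ℝ) : Prop :=
  ∀ v : E, ‖v‖ = 1 → (#{x ∈ S | u ≤ |⟪v, x - μ⟫|} : ℝ) ≤ β * #S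

theorem le_abs_inner_sub_or_le_abs_inner_sub {μ μ' : E} (hne : μ ≠ μ') {u : ℝ}
    (hd : 2 * u ≤ dist μ μ') (x : E) :
    u ≤ |⟪‖μ' - μ‖⁻¹ • (μ' - μ), x - μ⟫| ∨ u ≤ |⟪‖μ' - μ‖⁻¹ • (μ' - μ), x - μ'⟫| := by
  set v := ‖μ' - μ‖⁻¹ • (μ' - μ)
  have hv : ⟪v, x - μ⟫ - ⟪v, x - μ'⟫ = dist μ μ' := by
    rw [← inner_sub_right, sub_sub_sub_cancel_left, real_inner_smul_left,
      real_inner_self_eq_norm_sq, dist_comm, dist_eq_norm]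
    have : ‖μ' - μ‖ ≠ 0 := norm_ne_zero_iff.2 (sub_ne_zero.2 hne.symm)
    field_simp
  by_contra! h
  linarith [le_abs_self ⟪v, x - μ⟫, neg_abs_le ⟪v, x - μ'⟫]

theorem IsConcentratedAround.card_inter_le [DecidableEq E] {S S' : Finset E} {μ μ' : E}
    {u β β' : ℝ} (h : IsConcentratedAround S μ u β) (h' : IsConcentratedAround S' μ' u β')
    (hne : μ ≠ μ') (hd : 2 * u ≤ dist μ μ') :
    (#(S ∩ S') : ℝ) ≤ β * #S + β' * #S' := by
  set v := ‖μ' - μ‖⁻¹ • (μ' - μ)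
  have hv : ‖v‖ = 1 := norm_smul_inv_norm (sub_ne_zero.2 hne.symm)
  have hcover : S ∩ S' ⊆ {x ∈ S | u ≤ |⟪v, x - μ⟫|} ∪ {x ∈ S' | u ≤ |⟪v, x - μ'⟫|} := by
    intro x hx
    rw [mem_inter] at hx
    rcases le_abs_inner_sub_or_le_abs_inner_sub hne hd x with hx' | hx'
    · exact mem_union_left _ (mem_filter.2 ⟨hx.1, hx'⟩)
    · exact mem_union_right _ (mem_filter.2 ⟨hx.2, hx'⟩)
  calc (#(S ∩ S') : ℝ) ≤ #{x ∈ S | u ≤ |⟪v, x - μ⟫|} + #{x ∈ S' | u ≤ |⟪v, x - μ'⟫|} := by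
        exact_mod_cast (card_le_card hcover).trans (card_union_le _ _)
    _ ≤ β * #S + β' * #S' := add_le_add (h v hv) (h' v hv)

def IsCandidateMean (α u : ℝ) (T : Finset E) (μ : E) : Prop :=
  ∃ S ⊆ T, α * #T ≤ #S ∧ IsConcentratedAround S μ u (α / 10)

theorem card_le_of_isCandidateMean {α u : ℝ} (hα : 0 < α) {T C : Finset E} (hT : T.Nonempty)
    (hC : ∀ μ ∈ C, IsCandidateMean α u T μ)
    (hsep : (C : Set E).Pairwise fun μ μ' ↦ 2 * u ≤ dist μ μ') :
    (#C : ℝ) ≤ 5 / α := by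
  classical
  choose! S hST hlarge hconc using hC
  have := card_mul_le_of_card_inter_le (a := α) (β := α / 10) hT (by positivity) hST hlarge
    fun μ hμ μ' hμ' hne ↦ (hconc μ hμ).card_inter_le (hconc μ' hμ') hne (hsep hμ hμ' hne)
  rw [le_div_iff₀ hα]
  linarith

end InnerProductSpace

open Classical in
theorem stmt_0 (n : ℕ) (α u : ℝ) (hα0 : 0 < α)
    (hu : 0 < u) (T : Finset (EuclideanSpace ℝ (Fin n))) (hT : T.Nonempty) :
    ∃ F : Finset (EuclideanSpace ℝ (Fin n)), (F.card : ℝ) ≤ 5 / α ∧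
      ∀ μ : EuclideanSpace ℝ (Fin n),
        (∃ S ⊆ T, α * (T.card : ℝ) ≤ (S.card : ℝ) ∧
          ∀ v : EuclideanSpace ℝ (Fin n), ‖v‖ = 1 →
            ((S.filter fun x => u ≤ |(inner ℝ v (x - μ) : ℝ)|).card : ℝ) ≤ (α / 10) * (S.card : ℝ)) →
        ∃ f ∈ F, ‖f - μ‖ ≤ 2 * u := by
  let ε : ℝ≥0 := ⟨2 * u, by positivity⟩
  have hcard : ∀ C : Finset (EuclideanSpace ℝ (Fin n)), ↑C ⊆ {μ | IsCandidateMean α u T μ} →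
      Metric.IsSeparated ε (C : Set (EuclideanSpace ℝ (Fin n))) → (#C : ℝ) ≤ 5 / α :=
    fun C hCA hC ↦
      card_le_of_isCandidateMean hα0 hT hCA (hC.pairwise_lt_dist.imp fun _ _ ↦ le_of_lt)
  obtain ⟨F, hFA, hFsep, hFcover⟩ := Metric.exists_finset_isSeparated_isCover
    (B := ⌊5 / α⌋₊) fun C hCA hC ↦ Nat.le_floor (hcard C hCA hC)
  refine ⟨F, hcard F hFA hFsep, fun μ hμ ↦ ?_⟩
  obtain ⟨f, hf, hμf⟩ := hFcover hμ
  refine ⟨f, hf, ?_⟩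
  rw [← dist_eq_norm, dist_comm, ← coe_nndist]
  exact edist_le_coe.1 hμf
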